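/- arXiv:2401.08869 — 4 statements merged into one kernel-verified Lean document; each statement's English description precedes it below -/
import Mathlib

section
/- Let u₁, u₂, v₁, v₂ be words on X^{±1}. Then u₁qu₂ and v₁qv₂ are conjugate in the Miller Machine M(G) if and only if u₁u₂ and v₁v₂ are conjugate in G. -/
/-!
Common setup: a finitely presented group `G = ⟨X ∣ R⟩` (`X` a finite set, `R` a finite
nonempty set of words of the free group `F(X)`) and its Miller machine `M(G)`,
the group generated by `X ∪ Θ ∪ {q}`, where `Θ = {θ_α : α ∈ X ∪ R}`, subject to
the relations `θ_α x = x θ_α` (`x ∈ X`, `α ∈ X ∪ R`), `θ_x x q = q x θ_x` (`x ∈ X`)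
and `θ_r q = q r θ_r` (`r ∈ R`).
-/

namespace Miller

noncomputable section

/-- Index type for the letters `Θ`: one letter `θ_α` for each `α ∈ X ∪ R`
(since `X ∩ R = ∅`, the disjoint sum is faithful). -/
abbrev ThIdx (X : Type) (R : Finset (FreeGroup X)) : Type := X ⊕ {r : FreeGroup X // r ∈ R}

/-- The generators of the Miller machine: the letters of `X`, the letters `Θ`, and `q`. -/
abbrev Gen (X : Type) (R : Finset (FreeGroup X)) : Type := X ⊕ (ThIdx X R ⊕ Unit)

variable (X : Type) (R : Finset (FreeGroup X))

/-- The letter `x ∈ X`, as a word on the generators of `M(G)`. -/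
def xg (x : X) : FreeGroup (Gen X R) := FreeGroup.of (Sum.inl x)

/-- The letter `θ_α`, as a word on the generators of `M(G)`. -/
def θg (a : ThIdx X R) : FreeGroup (Gen X R) := FreeGroup.of (Sum.inr (Sum.inl a))

/-- The letter `q`, as a word on the generators of `M(G)`. -/
def qg : FreeGroup (Gen X R) := FreeGroup.of (Sum.inr (Sum.inr ()))

/-- A word on `X` is in particular a word on the generators of `M(G)`. -/
def ofX : FreeGroup X →* FreeGroup (Gen X R) := FreeGroup.map Sum.inl

/-- The defining relators of the Miller machine `M(G)`. -/
def rels : Set (FreeGroup (Gen X R)) :=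
  {w | (∃ (a : ThIdx X R) (x : X),
          w = θg X R a * xg X R x * (xg X R x * θg X R a)⁻¹) ∨
       (∃ x : X,
          w = θg X R (Sum.inl x) * xg X R x * qg X R *
              (qg X R * xg X R x * θg X R (Sum.inl x))⁻¹) ∨
       (∃ r : {r : FreeGroup X // r ∈ R},
          w = θg X R (Sum.inr r) * qg X R *
              (qg X R * ofX X R r.1 * θg X R (Sum.inr r))⁻¹)}

/-- The group `G = ⟨X ∣ R⟩`. -/
abbrev G := PresentedGroup (R : Set (FreeGroup X))

/-- The Miller machine `M(G)`. -/
abbrev M := PresentedGroup (rels X R)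

/-- The element of `G` represented by a word on `X`. -/
def toG : FreeGroup X →* G X R := PresentedGroup.mk _

/-- The element of `M(G)` represented by a word on the generators. -/
def toM : FreeGroup (Gen X R) →* M X R := PresentedGroup.mk _

/-- The element of `M(G)` represented by a word on `X`. -/
def embX : FreeGroup X →* M X R := (toM X R).comp (ofX X R)

/-- The element of `M(G)` represented by a word on `Θ`. -/
def embTh : FreeGroup (ThIdx X R) →* M X R :=
  (toM X R).comp (FreeGroup.map fun a => Sum.inr (Sum.inl a))

/-- The generator `x ∈ X` as element of `M(G)`. -/
def xM (x : X) : M X R := toM X R (xg X R x)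

/-- The generator `θ_α` as element of `M(G)`. -/
def θM (a : ThIdx X R) : M X R := toM X R (θg X R a)

/-- The generator `q` as element of `M(G)`. -/
def qM : M X R := toM X R (qg X R)

/-- The subgroup `⟨X, q⟩` of `M(G)`. -/
def XqSub : Subgroup (M X R) := Subgroup.closure (Set.range (xM X R) ∪ {qM X R})

/-- The subgroup `⟨Θ⟩` of `M(G)`. -/
def ThSub : Subgroup (M X R) := Subgroup.closure (Set.range (θM X R))

/-- The subgroup `H = ⟨X ∪ Θ⟩` of `M(G)`. -/
def Hgrp : Subgroup (M X R) := Subgroup.closure (Set.range (xM X R) ∪ Set.range (θM X R))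

/-- The subgroup `K₋₁ = ⟨{θ_x x : x ∈ X} ∪ {θ_r : r ∈ R}⟩` of `M(G)`. -/
def Kneg : Subgroup (M X R) := Subgroup.closure
  ((Set.range fun x : X => θM X R (Sum.inl x) * xM X R x) ∪
   (Set.range fun r : {r : FreeGroup X // r ∈ R} => θM X R (Sum.inr r)))

/-- The subgroup `K₁ = ⟨{θ_x x : x ∈ X} ∪ {θ_r r : r ∈ R}⟩` of `M(G)`. -/
def Kpos : Subgroup (M X R) := Subgroup.closure
  ((Set.range fun x : X => θM X R (Sum.inl x) * xM X R x) ∪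
   (Set.range fun r : {r : FreeGroup X // r ∈ R} => θM X R (Sum.inr r) * embX X R r.1))

/-- `‖g‖`: the (reduced) word length of an element of a free group. -/
def wlen {β : Type} (g : FreeGroup β) : ℕ :=
  sInf {n | ∃ l : List (β × Bool), FreeGroup.mk l = g ∧ l.length = n}

/-- `|g|`: word length in `M(G)` with respect to the generating set `X ∪ Θ ∪ {q}`. -/
def mlen (g : M X R) : ℕ :=
  sInf {n | ∃ w : FreeGroup (Gen X R), toM X R w = g ∧ wlen w = n}

/-- `c(u,v)`: the minimal length of a conjugator taking `u` to `v` in `M(G)`. -/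
def c (u v : M X R) : ℕ :=
  sInf {n | ∃ γ : M X R, γ * u * γ⁻¹ = v ∧ mlen X R γ = n}

/-- `c'(u,v)`: the minimal length of a conjugator in `⟨X ∪ Θ⟩` taking `u` to `v`. -/
def c' (u v : M X R) : ℕ :=
  sInf {n | ∃ γ ∈ Hgrp X R, γ * u * γ⁻¹ = v ∧ mlen X R γ = n}

/-- The product `∏_{i<m} w_i r_i w_i⁻¹`. -/
def prodConj (m : ℕ) (w r : ℕ → FreeGroup X) : FreeGroup X :=
  ((List.range m).map fun i => w i * r i * (w i)⁻¹).prod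

/-- `r_0, …, r_{m-1} ∈ R^{±1}`. -/
def IsRelSeq (m : ℕ) (r : ℕ → FreeGroup X) : Prop := ∀ i < m, r i ∈ R ∨ (r i)⁻¹ ∈ R

/-- `δ(g)`: the least `m` such that `g` is freely equal to a product of `m`
conjugates of elements of `R^{±1}`. -/
def area (g : FreeGroup X) : ℕ :=
  sInf {m | ∃ w r : ℕ → FreeGroup X, IsRelSeq X R m r ∧ g = prodConj X m w r}

/-- The Dehn function `Δ` of the presentation `⟨X ∣ R⟩`. -/
def Dehn (n : ℕ) : ℕ :=
  sSup {d | ∃ g : FreeGroup X, wlen g ≤ n ∧ toG X R g = 1 ∧ area X R g = d}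

/-- `f(w) = m + ‖w₁‖ + ‖w_m‖ + ∑_{i=1}^{m-1} ‖w_i⁻¹ w_{i+1}‖` (with `0`-based indexing). -/
def fval (m : ℕ) (w : ℕ → FreeGroup X) : ℕ :=
  m + wlen (w 0) + wlen (w (m - 1)) + ∑ i ∈ Finset.range (m - 1), wlen ((w i)⁻¹ * w (i + 1))

/-- `λ(g)`: the minimum of `f(w)` over expressions `w = ∏ w_i r_i w_i⁻¹` freely equal to `g`. -/
def lam (g : FreeGroup X) : ℕ :=
  sInf {n | ∃ (m : ℕ) (w r : ℕ → FreeGroup X),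
    1 ≤ m ∧ IsRelSeq X R m r ∧ g = prodConj X m w r ∧ fval X m w = n}

/-- `Λ(n)`: the maximum of `λ(g)` over words `g` with `g =_G 1` and `‖g‖ ≤ n`. -/
def Lam (n : ℕ) : ℕ :=
  sSup {d | ∃ g : FreeGroup X, wlen g ≤ n ∧ toG X R g = 1 ∧ lam X R g = d}

/-- `t = max({‖r‖ : r ∈ R} ∪ {2})`. -/
def t : ℕ := max (R.sup fun r => wlen r) 2

/-- `w, ε` witness the iso-computational list conjugacy `u ∼^σ v` (indices `0,…,k-1`,
with the convention that the index after `k-1` is `0`, i.e. `σ_{k+1} = σ₁`). -/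
def IsICLCWitness (k : ℕ) (σ : ℕ → ℤ) (u v : ℕ → FreeGroup X) (w ε : FreeGroup X) : Prop :=
  toG X R ε = 1 ∧ ∀ i < k,
    (σ i = 1 ∧ σ ((i + 1) % k) = 1 → w * ε * u i * w⁻¹ = v i) ∧
    (σ i = 1 ∧ σ ((i + 1) % k) = -1 → w * ε * u i * ε⁻¹ * w⁻¹ = v i) ∧
    (σ i = -1 ∧ σ ((i + 1) % k) = 1 → w * u i * w⁻¹ = v i) ∧
    (σ i = -1 ∧ σ ((i + 1) % k) = -1 → w * u i * ε⁻¹ * w⁻¹ = v i)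

/-- Iso-computational list conjugacy `u ∼^σ v`. -/
def ICLC (k : ℕ) (σ : ℕ → ℤ) (u v : ℕ → FreeGroup X) : Prop :=
  ∃ w ε : FreeGroup X, IsICLCWitness X R k σ u v w ε

/-- `c_{k,σ}(u,v)`: the least `‖w‖` over witnessing pairs `(w, ε)` for `u ∼^σ v`. -/
def cList (k : ℕ) (σ : ℕ → ℤ) (u v : ℕ → FreeGroup X) : ℕ :=
  sInf {n | ∃ w ε : FreeGroup X, IsICLCWitness X R k σ u v w ε ∧ wlen w = n}

/-- `C_{k,σ}(n)`. -/
def CC (k : ℕ) (σ : ℕ → ℤ) (n : ℕ) : ℕ :=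
  sSup {d | ∃ u v : ℕ → FreeGroup X, ICLC X R k σ u v ∧
    (∑ i ∈ Finset.range k, (wlen (u i) + wlen (v i))) ≤ n - 2 * k ∧
    cList X R k σ u v = d}

/-- The alphabet `X ∪ {q}`. -/
abbrev Yt (X : Type) : Type := X ⊕ Unit

/-- The letter `q` in the free group `F(X ∪ {q})`. -/
def qY : FreeGroup (Yt X) := FreeGroup.of (Sum.inr ())

/-- A word on `X` as a word on `X ∪ {q}`. -/
def embY : FreeGroup X →* FreeGroup (Yt X) := FreeGroup.map Sum.inl

/-- The element of `M(G)` represented by a word on `X ∪ {q}`. -/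
def toMY : FreeGroup (Yt X) →* M X R :=
  (toM X R).comp (FreeGroup.map (Sum.elim Sum.inl fun u => Sum.inr (Sum.inr u)))

/-- The word `q^{σ₁}u₁q^{σ₂}u₂⋯q^{σ_k}u_k` on `X ∪ {q}` (`0`-based indexing). -/
def qword (k : ℕ) (σ : ℕ → ℤ) (u : ℕ → FreeGroup X) : FreeGroup (Yt X) :=
  ((List.range k).map fun i => qY X ^ σ i * embY X (u i)).prod

/-- The word `q^{σ₁}u₁q^{σ₂}u₂⋯q^{σ_k}u_k` is (freely) reduced, expressed as:
its reduced length equals the sum of the lengths of its letters. -/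
def ReducedForm (k : ℕ) (σ : ℕ → ℤ) (u : ℕ → FreeGroup X) : Prop :=
  wlen (qword X k σ u) = k + ∑ i ∈ Finset.range k, wlen (u i)

/-- The element `q^{σ₁}u₁q^{σ₂}u₂⋯q^{σ_k}u_k` of `M(G)`. -/
def qwordM (k : ℕ) (σ : ℕ → ℤ) (u : ℕ → FreeGroup X) : M X R :=
  toMY X R (qword X k σ u)

/-- `σ` is a tuple of signs `±1`. -/
def IsSgn (k : ℕ) (σ : ℕ → ℤ) : Prop := ∀ i < k, σ i = 1 ∨ σ i = -1

/-- `D_{k,σ}(n)`: restriction of the conjugator length function of `M(G)` to conjugate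
pairs `x = q^{σ₁}u₁⋯q^{σ_k}u_k`, `y = q^{σ₁}v₁⋯q^{σ_k}v_k` that are reduced words with
`∑ (‖u_i‖ + ‖v_i‖) ≤ n - 2k`. -/
def Dk (k : ℕ) (σ : ℕ → ℤ) (n : ℕ) : ℕ :=
  sSup {d | ∃ u v : ℕ → FreeGroup X,
    ReducedForm X k σ u ∧ ReducedForm X k σ v ∧
    IsConj (qwordM X R k σ u) (qwordM X R k σ v) ∧
    (∑ i ∈ Finset.range k, (wlen (u i) + wlen (v i))) ≤ n - 2 * k ∧
    c X R (qwordM X R k σ u) (qwordM X R k σ v) = d}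

/-- `D'_{k,σ}(n)`: as `D_{k,σ}(n)`, but for pairs conjugate via an element of `⟨X ∪ Θ⟩`
and with minimal conjugator length measured over conjugators in `⟨X ∪ Θ⟩`. -/
def Dk' (k : ℕ) (σ : ℕ → ℤ) (n : ℕ) : ℕ :=
  sSup {d | ∃ u v : ℕ → FreeGroup X,
    ReducedForm X k σ u ∧ ReducedForm X k σ v ∧
    (∃ γ ∈ Hgrp X R, γ * qwordM X R k σ u * γ⁻¹ = qwordM X R k σ v) ∧
    (∑ i ∈ Finset.range k, (wlen (u i) + wlen (v i))) ≤ n - 2 * k ∧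
    c' X R (qwordM X R k σ u) (qwordM X R k σ v) = d}

/-- `D₀(n)`: restriction of the conjugator length function of `M(G)` to pairs
`(qu, q)` with `u` a word on `X`, `qu` conjugate to `q`, and `‖u‖ ≤ n - 2`. -/
def D0 (n : ℕ) : ℕ :=
  sSup {d | ∃ u : FreeGroup X, wlen u ≤ n - 2 ∧
    IsConj (qM X R * embX X R u) (qM X R) ∧ c X R (qM X R * embX X R u) (qM X R) = d}

/-- `D'₀(n)`: as `D₀(n)`, via conjugators in `⟨X ∪ Θ⟩`. -/
def D0' (n : ℕ) : ℕ :=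
  sSup {d | ∃ u : FreeGroup X, wlen u ≤ n - 2 ∧
    (∃ γ ∈ Hgrp X R, γ * (qM X R * embX X R u) * γ⁻¹ = qM X R) ∧
    c' X R (qM X R * embX X R u) (qM X R) = d}

/-- The endomorphism `φ_α` of `F(X ∪ {q})`: it fixes each `x ∈ X` and sends `q` to
`α⁻¹qα` if `α ∈ X` and to `qα` if `α ∈ R`. -/
def phi (a : ThIdx X R) : FreeGroup (Yt X) →* FreeGroup (Yt X) :=
  FreeGroup.lift fun s =>
    match s with
    | Sum.inl x => FreeGroup.of (Sum.inl x : Yt X)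
    | Sum.inr _ =>
      match a with
      | Sum.inl x' => (FreeGroup.of (Sum.inl x' : Yt X))⁻¹ * qY X * FreeGroup.of (Sum.inl x')
      | Sum.inr r => qY X * embY X r.1

end

end Miller

/-!
The retraction `M(G) → G` killing `Θ` and `q` gives one direction. For the other, rotate
both elements to the form `q a`. Conjugating by `θ_w w` (which commutes with `q`) turns `q a`
into `q (w a w⁻¹)`, and conjugating by `θ_r` (which commutes with `X`) turns `q a` into `q r a`.
So the `n` with `q a ∼ q (n a)` for all `a` form a normal subgroup of `F(X)` containing `R`,
hence everything that is trivial in `G`.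
-/

theorem isConj_mul_comm {α : Type*} [Group α] (a b : α) : IsConj (a * b) (b * a) :=
  isConj_iff.mpr ⟨b, by group⟩

theorem isConj_congr {α : Type*} [Monoid α] {a a' b b' : α} (ha : IsConj a a')
    (hb : IsConj b b') : IsConj a b ↔ IsConj a' b' :=
  ⟨fun h => (ha.symm.trans h).trans hb, fun h => (ha.trans h).trans hb.symm⟩

namespace Miller

variable (X : Type) (R : Finset (FreeGroup X))

theorem θM_mul_xM (a : ThIdx X R) (x : X) : θM X R a * xM X R x = xM X R x * θM X R a :=
  PresentedGroup.mk_eq_mk_of_mul_inv_mem (Or.inl ⟨a, x, rfl⟩)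

theorem θM_mul_xM_mul_qM (x : X) :
    θM X R (Sum.inl x) * xM X R x * qM X R = qM X R * xM X R x * θM X R (Sum.inl x) :=
  PresentedGroup.mk_eq_mk_of_mul_inv_mem (Or.inr (Or.inl ⟨x, rfl⟩))

theorem θM_mul_qM (r : {r : FreeGroup X // r ∈ R}) :
    θM X R (Sum.inr r) * qM X R = qM X R * embX X R r.1 * θM X R (Sum.inr r) :=
  PresentedGroup.mk_eq_mk_of_mul_inv_mem (Or.inr (Or.inr ⟨r, rfl⟩))

theorem commute_θM_embX (a : ThIdx X R) (w : FreeGroup X) :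
    Commute (θM X R a) (embX X R w) := by
  induction w using FreeGroup.induction_on with
  | C1 => simp
  | of x => exact θM_mul_xM X R a x
  | inv_of x h => simpa using h.inv_right
  | mul y z hy hz => simpa using hy.mul_right hz

noncomputable def thetaMul : FreeGroup X →* M X R :=
  FreeGroup.lift fun x => θM X R (Sum.inl x) * xM X R x

theorem commute_thetaMul_qM (w : FreeGroup X) : Commute (thetaMul X R w) (qM X R) := by
  induction w using FreeGroup.induction_on with
  | C1 => simp
  | of x =>
    change θM X R (Sum.inl x) * xM X R x * qM X R = qM X R * (θM X R (Sum.inl x) * xM X R x)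
    rw [θM_mul_xM_mul_qM, mul_assoc, θM_mul_xM]
  | inv_of x h => simpa using h.inv_left
  | mul y z hy hz => simpa using hy.mul_left hz

theorem thetaMul_conj_embX (w z : FreeGroup X) :
    thetaMul X R w * embX X R z * (thetaMul X R w)⁻¹ = embX X R (w * z * w⁻¹) := by
  induction w using FreeGroup.induction_on generalizing z with
  | C1 => simp
  | of x =>
    change θM X R (Sum.inl x) * embX X R (FreeGroup.of x) * embX X R z *
      (θM X R (Sum.inl x) * embX X R (FreeGroup.of x))⁻¹ = _
    rw [(commute_θM_embX X R _ _).eq, mul_assoc (embX X R _), (commute_θM_embX X R _ z).eq]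
    simp [mul_assoc]
  | inv_of x h =>
    have := h ((FreeGroup.of x)⁻¹ * z * FreeGroup.of x)
    simp only [mul_assoc, mul_inv_cancel_left, mul_inv_cancel, mul_one] at this
    rw [map_inv, inv_inv, ← this]
    group
  | mul a b ha hb =>
    have := ha (b * z * b⁻¹)
    rw [← hb] at this
    simpa [mul_assoc] using this

theorem isConj_qM_mul_embX_conj (a w : FreeGroup X) :
    IsConj (qM X R * embX X R a) (qM X R * embX X R (w * a * w⁻¹)) := by
  refine isConj_iff.mpr ⟨thetaMul X R w, ?_⟩
  rw [← thetaMul_conj_embX]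
  simp only [← mul_assoc, (commute_thetaMul_qM X R w).eq]

theorem isConj_qM_mul_embX_rel (a : FreeGroup X) (r : {r : FreeGroup X // r ∈ R}) :
    IsConj (qM X R * embX X R a) (qM X R * embX X R (r.1 * a)) := by
  refine isConj_iff.mpr ⟨θM X R (Sum.inr r), ?_⟩
  rw [← mul_assoc, θM_mul_qM, mul_assoc _ (θM X R _), (commute_θM_embX X R _ a).eq, map_mul]
  group

def qShift : Subgroup (FreeGroup X) where
  carrier := {n | ∀ a, IsConj (qM X R * embX X R a) (qM X R * embX X R (n * a))}
  one_mem' a := by rw [one_mul]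
  mul_mem' {m n} hm hn a := by simpa [mul_assoc] using (hn a).trans (hm (n * a))
  inv_mem' {n} hn a := by simpa using (hn (n⁻¹ * a)).symm

instance qShift_normal : (qShift X R).Normal where
  conj_mem n hn g a := by
    have h := ((isConj_qM_mul_embX_conj X R a g⁻¹).trans (hn _)).trans
      (isConj_qM_mul_embX_conj X R _ g)
    simpa [mul_assoc] using h

theorem mem_qShift_of_toG_eq_one {n : FreeGroup X} (hn : toG X R n = 1) : n ∈ qShift X R :=
  Subgroup.normalClosure_le_normal (N := qShift X R)
    (fun r hr a => isConj_qM_mul_embX_rel X R a ⟨r, hr⟩) (PresentedGroup.mk_eq_one_iff.mp hn)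

theorem isConj_qM_mul_embX_of_isConj_toG {a b : FreeGroup X}
    (h : IsConj (toG X R a) (toG X R b)) : IsConj (qM X R * embX X R a) (qM X R * embX X R b) := by
  obtain ⟨g, hg⟩ := isConj_iff.mp h
  obtain ⟨w, rfl⟩ := PresentedGroup.mk_surjective _ g
  have hn : toG X R (b * (w * a * w⁻¹)⁻¹) = 1 := by
    rw [map_mul, map_inv, ← hg]
    simp [toG]
  simpa only [inv_mul_cancel_right] using
    (isConj_qM_mul_embX_conj X R a w).trans (mem_qShift_of_toG_eq_one X R hn _)

theorem retract_rels : ∀ w ∈ rels X R,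
    FreeGroup.lift (Sum.elim (fun x => toG X R (FreeGroup.of x)) 1) w = 1 := by
  have hX : (FreeGroup.lift (Sum.elim (fun x => toG X R (FreeGroup.of x)) 1)).comp (ofX X R)
      = toG X R := FreeGroup.ext_hom _ _ fun x => by simp [ofX]
  rintro w (⟨a, x, rfl⟩ | ⟨x, rfl⟩ | ⟨r, rfl⟩)
  · simp [θg, xg]
  · simp [θg, xg, qg]
  · simp only [map_mul, map_inv, ← MonoidHom.comp_apply, hX]
    simp [θg, qg, toG, PresentedGroup.one_of_mem (Finset.mem_coe.mpr r.2)]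

def retract : M X R →* G X R := PresentedGroup.toGroup (retract_rels X R)

theorem retract_embX (w : FreeGroup X) : retract X R (embX X R w) = toG X R w := by
  induction w using FreeGroup.induction_on with
  | C1 => simp
  | of x => exact PresentedGroup.toGroup.of _
  | inv_of x h => simpa using h
  | mul y z hy hz => simp [hy, hz]

theorem retract_qM : retract X R (qM X R) = 1 := PresentedGroup.toGroup.of _

theorem isConj_qM_mul_embX_iff (a b : FreeGroup X) :
    IsConj (qM X R * embX X R a) (qM X R * embX X R b) ↔ IsConj (toG X R a) (toG X R b) := by
  refine ⟨fun h => ?_, isConj_qM_mul_embX_of_isConj_toG X R⟩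
  simpa [retract_embX, retract_qM] using (retract X R).map_isConj h

theorem isConj_embX_mul_qM_mul_embX (u₁ u₂ : FreeGroup X) :
    IsConj (embX X R u₁ * qM X R * embX X R u₂) (qM X R * embX X R (u₂ * u₁)) := by
  simpa [mul_assoc] using isConj_mul_comm (embX X R u₁) (qM X R * embX X R u₂)

end Miller

open Miller in
theorem statement0_general (X : Type) (R : Finset (FreeGroup X))
    (u₁ u₂ v₁ v₂ : FreeGroup X) :
    IsConj (embX X R u₁ * qM X R * embX X R u₂) (embX X R v₁ * qM X R * embX X R v₂) ↔
      IsConj (toG X R (u₁ * u₂)) (toG X R (v₁ * v₂)) := by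
  have hG (a b : FreeGroup X) : IsConj (toG X R (a * b)) (toG X R (b * a)) := by
    simpa using isConj_mul_comm (toG X R a) (toG X R b)
  rw [isConj_congr (isConj_embX_mul_qM_mul_embX X R u₁ u₂)
      (isConj_embX_mul_qM_mul_embX X R v₁ v₂), isConj_qM_mul_embX_iff,
    isConj_congr (hG u₁ u₂) (hG v₁ v₂)]

open Miller in
/-- Miller. Let `u₁, u₂, v₁, v₂` be words on `X^{±1}`. Then `u₁qu₂` and
`v₁qv₂` are conjugate in the Miller machine `M(G)` if and only if `u₁u₂` and `v₁v₂` are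
conjugate in `G`. -/
theorem statement0 (X : Type) [Fintype X] (R : Finset (FreeGroup X)) (hR : R.Nonempty)
    (u₁ u₂ v₁ v₂ : FreeGroup X) :
    IsConj (embX X R u₁ * qM X R * embX X R u₂) (embX X R v₁ * qM X R * embX X R v₂) ↔
      IsConj (toG X R (u₁ * u₂)) (toG X R (v₁ * v₂)) :=
  statement0_general X R u₁ u₂ v₁ v₂
end

section
/- The subgroup H = ⟨X ∪ Θ⟩_{M(G)} of the Miller Machine M(G) is isomorphic to the direct product F(X) × F(Θ). Moreover, the homomorphism φ : H → F(Θ) defined by φ(x) = 1 for x ∈ X and φ(θ_α) = θ_α for α ∈ X ∪ R restricts to an isomorphism from K_{−1} onto F(Θ), and the homomorphism φ' : H → F(Θ) defined by φ'(θ_x x) = θ_x and φ'(θ_r r) = θ_r restricts to an isomorphism from K_1 onto F(Θ). In particular, K_{−1} is a free group freely generated by {θ_x x : x ∈ X} ∪ {θ_r : r ∈ R}, and K_1 is a free group freely generated by {θ_x x : x ∈ X} ∪ {θ_r r : r ∈ R}. -/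
/-!
The relations of `M(G)` say that `X` commutes with `Θ`, and that conjugation by `q⁻¹` sends
`θ_x x ↦ x θ_x` and `θ_r ↦ r θ_r`. Hence `M(G)` is the HNN extension of `F(X) × F(Θ)` with stable
letter `q⁻¹` whose associated subgroups are the graphs `{(f₋ v, v)}` and `{(f₊ v, v)}` of two
homomorphisms `f₋, f₊ : F(Θ) → F(X)`; these graphs are the copies of `K₋₁` and `K₁`. The base group
of an HNN extension embeds, so `F(X) × F(Θ) ≅ H`, and the projection onto `F(Θ)` is bijective on
each graph.
-/

namespace MonoidHom

variable {F A : Type*} [Group F] [Group A]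

def graphSection (f : F →* A) : F →* A × F := f.prod (MonoidHom.id F)

@[simp]
lemma graphSection_apply (f : F →* A) (x : F) : graphSection f x = (f x, x) := rfl

lemma graphSection_injective (f : F →* A) : Function.Injective (graphSection f) :=
  fun _ _ h => congrArg Prod.snd h

noncomputable def graphRangeEquiv (f g : F →* A) :
    (graphSection f).range ≃* (graphSection g).range :=
  (ofInjective (graphSection_injective f)).symm.trans (ofInjective (graphSection_injective g))

lemma graphRangeEquiv_apply (f g : F →* A) (x : F) :
    graphRangeEquiv f g ⟨graphSection f x, x, rfl⟩ = ⟨graphSection g x, x, rfl⟩ := by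
  have hx : (ofInjective (graphSection_injective f)).symm ⟨graphSection f x, x, rfl⟩ = x := by
    rw [MulEquiv.symm_apply_eq]
    exact Subtype.ext (ofInjective_apply _).symm
  rw [graphRangeEquiv, MulEquiv.trans_apply, hx]
  exact Subtype.ext (ofInjective_apply _)

end MonoidHom

namespace HNNExtension

open MonoidHom

variable {F A : Type*} [Group F] [Group A]

lemma of_graphSection_mul_inv_t (f g : F →* A) (x : F) :
    (of (graphSection f x) : HNNExtension (A × F) _ _ (graphRangeEquiv f g)) * t⁻¹ =
      t⁻¹ * of (graphSection g x) := by
  have h := of_mul_inv_t (φ := graphRangeEquiv f g) ⟨graphSection f x, x, rfl⟩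
  rwa [graphRangeEquiv_apply] at h

end HNNExtension

namespace Miller

open MonoidHom

variable (X : Type) (R : Finset (FreeGroup X))

lemma embX_eq_lift : embX X R = FreeGroup.lift (xM X R) :=
  FreeGroup.ext_hom _ _ fun _ => by simp [embX, ofX, xM, xg]

lemma embTh_eq_lift : embTh X R = FreeGroup.lift (θM X R) :=
  FreeGroup.ext_hom _ _ fun _ => by simp [embTh, θM, θg]

@[simp] lemma embX_of (x : X) : embX X R (.of x) = xM X R x := by simp [embX_eq_lift]

@[simp] lemma embTh_of (a : ThIdx X R) : embTh X R (.of a) = θM X R a := by simp [embTh_eq_lift]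

lemma commute_xM_θM (x : X) (a : ThIdx X R) : Commute (xM X R x) (θM X R a) := by
  have h : toM X R (θg X R a * xg X R x * (xg X R x * θg X R a)⁻¹) = 1 :=
    PresentedGroup.one_of_mem (Or.inl ⟨a, x, rfl⟩)
  rw [map_mul, map_inv, mul_inv_eq_one, map_mul, map_mul] at h
  exact h.symm

lemma commute_embX_embTh (u : FreeGroup X) (v : FreeGroup (ThIdx X R)) :
    Commute (embX X R u) (embTh X R v) := by
  have hθ : (embTh X R).range ≤ Subgroup.centralizer (Set.range (xM X R)) := by
    rw [embTh_eq_lift, FreeGroup.range_lift_eq_closure, Subgroup.closure_le]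
    rintro - ⟨a, rfl⟩ - ⟨x, rfl⟩
    exact commute_xM_θM X R x a
  have hX : (embX X R).range ≤ Subgroup.centralizer (embTh X R).range := by
    rw [embX_eq_lift, FreeGroup.range_lift_eq_closure, Subgroup.closure_le]
    rintro - ⟨x, rfl⟩ m hm
    exact (hθ hm _ ⟨x, rfl⟩).symm
  exact (hX ⟨u, rfl⟩ _ ⟨v, rfl⟩).symm

noncomputable def prodToM : FreeGroup X × FreeGroup (ThIdx X R) →* M X R :=
  (embX X R).noncommCoprod (embTh X R) (commute_embX_embTh X R)

lemma prodToM_apply (u : FreeGroup X) (v : FreeGroup (ThIdx X R)) :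
    prodToM X R (u, v) = embX X R u * embTh X R v := rfl

lemma range_prodToM : (prodToM X R).range = Hgrp X R := by
  rw [prodToM, noncommCoprod_range, embX_eq_lift, embTh_eq_lift, FreeGroup.range_lift_eq_closure,
    FreeGroup.range_lift_eq_closure, ← Subgroup.closure_union, Hgrp]

/-- The `X`-parts of the generators `θ_α x` (`α = x ∈ X`) and `θ_r` of `K₋₁`. -/
def fneg : FreeGroup (ThIdx X R) →* FreeGroup X := FreeGroup.lift (Sum.elim FreeGroup.of 1)

/-- The `X`-parts of the generators `θ_α x` (`α = x ∈ X`) and `θ_r r` of `K₁`. -/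
def fpos : FreeGroup (ThIdx X R) →* FreeGroup X :=
  FreeGroup.lift (Sum.elim FreeGroup.of Subtype.val)

@[simp] lemma fneg_of_inl (x : X) : fneg X R (.of (.inl x)) = .of x := by simp [fneg]
@[simp] lemma fneg_of_inr (r : R) : fneg X R (.of (.inr r)) = 1 := by simp [fneg]
@[simp] lemma fpos_of_inl (x : X) : fpos X R (.of (.inl x)) = .of x := by simp [fpos]
@[simp] lemma fpos_of_inr (r : R) : fpos X R (.of (.inr r)) = r := by simp [fpos]

abbrev HNN : Type :=
  HNNExtension (FreeGroup X × FreeGroup (ThIdx X R)) _ _ (graphRangeEquiv (fneg X R) (fpos X R))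

noncomputable def toHNNGen : Gen X R → HNN X R :=
  Sum.elim (fun x => HNNExtension.of (FreeGroup.of x, 1))
    (Sum.elim (fun a => HNNExtension.of (1, FreeGroup.of a)) fun _ => HNNExtension.t⁻¹)

lemma lift_toHNNGen_ofX (w : FreeGroup X) :
    FreeGroup.lift (toHNNGen X R) (ofX X R w) = HNNExtension.of (w, 1) := by
  have h : (FreeGroup.lift (toHNNGen X R)).comp (ofX X R) = HNNExtension.of.comp (inl _ _) :=
    FreeGroup.ext_hom _ _ fun _ => by simp [ofX, toHNNGen]
  exact DFunLike.congr_fun h w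

lemma lift_toHNNGen_eq_one : ∀ w ∈ rels X R, FreeGroup.lift (toHNNGen X R) w = 1 := by
  have hof := HNNExtension.of_graphSection_mul_inv_t (fneg X R) (fpos X R)
  rintro w (⟨a, x, rfl⟩ | ⟨x, rfl⟩ | ⟨r, rfl⟩) <;>
    rw [map_mul, map_inv, mul_inv_eq_one] <;>
    simp only [map_mul, xg, θg, qg, FreeGroup.lift_apply_of, lift_toHNNGen_ofX] <;>
    simp only [toHNNGen, Sum.elim_inl, Sum.elim_inr]
  · simp [← map_mul]
  · rw [← map_mul, mul_assoc, ← map_mul]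
    simpa using hof (FreeGroup.of (Sum.inl x))
  · rw [mul_assoc, ← map_mul]
    simpa using hof (FreeGroup.of (Sum.inr r))

noncomputable def toHNN : M X R →* HNN X R := PresentedGroup.toGroup (lift_toHNNGen_eq_one X R)

lemma toHNN_toM (w : FreeGroup (Gen X R)) :
    toHNN X R (toM X R w) = FreeGroup.lift (toHNNGen X R) w := rfl

lemma toHNN_prodToM (p : FreeGroup X × FreeGroup (ThIdx X R)) :
    toHNN X R (prodToM X R p) = HNNExtension.of p := by
  have hθ : (toHNN X R).comp (embTh X R) = HNNExtension.of.comp (inr _ _) :=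
    FreeGroup.ext_hom _ _ fun a => by simp [embTh, toHNN_toM, toHNNGen]
  obtain ⟨u, v⟩ := p
  rw [prodToM_apply, map_mul, embX, comp_apply, toHNN_toM, lift_toHNNGen_ofX, ← comp_apply, hθ]
  simp [← map_mul]

lemma prodToM_injective : Function.Injective (prodToM X R) := fun p p' h => by
  have h' := congrArg (toHNN X R) h
  rw [toHNN_prodToM, toHNN_prodToM] at h'
  exact HNNExtension.of_injective _ h'

lemma prodToM_graphSection_of (f : FreeGroup (ThIdx X R) →* FreeGroup X) (a : ThIdx X R) :
    prodToM X R (graphSection f (.of a)) = θM X R a * embX X R (f (.of a)) := by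
  rw [graphSection_apply, prodToM_apply, ← embTh_of X R a]
  exact (commute_embX_embTh X R _ _).eq

lemma range_prodToM_comp_graphSection (f : FreeGroup (ThIdx X R) →* FreeGroup X) :
    ((prodToM X R).comp (graphSection f)).range =
      Subgroup.closure (Set.range fun a => θM X R a * embX X R (f (.of a))) := by
  rw [← FreeGroup.range_lift_eq_closure]
  congr 1
  exact FreeGroup.ext_hom _ _ fun a => by
    simp only [comp_apply, prodToM_graphSection_of, FreeGroup.lift_apply_of]

lemma Kneg_eq : Kneg X R = ((prodToM X R).comp (graphSection (fneg X R))).range := by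
  rw [range_prodToM_comp_graphSection, Kneg, ← Set.Sum.elim_range]
  congr 2
  funext a
  rcases a with x | r <;> simp

lemma Kpos_eq : Kpos X R = ((prodToM X R).comp (graphSection (fpos X R))).range := by
  rw [range_prodToM_comp_graphSection, Kpos, ← Set.Sum.elim_range]
  congr 2
  funext a
  rcases a with x | r <;> simp

lemma prodToM_mem_Hgrp (p : FreeGroup X × FreeGroup (ThIdx X R)) : prodToM X R p ∈ Hgrp X R :=
  range_prodToM X R ▸ ⟨p, rfl⟩

noncomputable def hgrpEquiv : Hgrp X R ≃* FreeGroup X × FreeGroup (ThIdx X R) :=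
  (MulEquiv.subgroupCongr (range_prodToM X R).symm).trans (ofInjective (prodToM_injective X R)).symm

lemma hgrpEquiv_mk_prodToM (p : FreeGroup X × FreeGroup (ThIdx X R))
    (hp : prodToM X R p ∈ Hgrp X R) :
    hgrpEquiv X R ⟨prodToM X R p, hp⟩ = p := by
  rw [← MulEquiv.eq_symm_apply]
  exact Subtype.ext (ofInjective_apply (prodToM_injective X R)).symm

noncomputable def φH : Hgrp X R →* FreeGroup (ThIdx X R) :=
  (snd _ _).comp (hgrpEquiv X R).toMonoidHom

lemma φH_mk_of_prodToM_eq {m : M X R} (hm : m ∈ Hgrp X R)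
    {p : FreeGroup X × FreeGroup (ThIdx X R)} (hp : prodToM X R p = m) : φH X R ⟨m, hm⟩ = p.2 := by
  subst hp
  simp [φH, hgrpEquiv_mk_prodToM]

lemma bijective_φH_restrict (f : FreeGroup (ThIdx X R) →* FreeGroup X) {K : Subgroup (M X R)}
    (hK : K = ((prodToM X R).comp (graphSection f)).range) :
    Function.Bijective fun g : {g : Hgrp X R // (g : M X R) ∈ K} => φH X R g.1 := by
  let s : FreeGroup (ThIdx X R) → {g : Hgrp X R // (g : M X R) ∈ K} :=
    fun v => ⟨⟨prodToM X R (graphSection f v), prodToM_mem_Hgrp X R _⟩, hK ▸ ⟨v, rfl⟩⟩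
  have hs : Function.RightInverse s fun g => φH X R g.1 := fun v => φH_mk_of_prodToM_eq X R _ rfl
  have hsurj : Function.Surjective s := by
    rintro ⟨⟨m, hm⟩, hmK⟩
    rw [hK] at hmK
    obtain ⟨v, rfl⟩ := hmK
    exact ⟨v, rfl⟩
  exact Function.bijective_iff_has_inverse.mpr ⟨s, hs.rightInverse_of_surjective hsurj, hs⟩

end Miller

open Miller in
theorem statement4_general (X : Type) (R : Finset (FreeGroup X)) :
    Nonempty (↥(Hgrp X R) ≃* FreeGroup X × FreeGroup (ThIdx X R)) ∧
    (∃ φ : ↥(Hgrp X R) →* FreeGroup (ThIdx X R),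
      (∀ (x : X) (h : xM X R x ∈ Hgrp X R), φ ⟨xM X R x, h⟩ = 1) ∧
      (∀ (a : ThIdx X R) (h : θM X R a ∈ Hgrp X R), φ ⟨θM X R a, h⟩ = FreeGroup.of a) ∧
      Function.Bijective
        (fun g : {g : ↥(Hgrp X R) // (g : M X R) ∈ Kneg X R} => φ g.1)) ∧
    (∃ φ' : ↥(Hgrp X R) →* FreeGroup (ThIdx X R),
      (∀ (x : X) (h : θM X R (Sum.inl x) * xM X R x ∈ Hgrp X R),
        φ' ⟨θM X R (Sum.inl x) * xM X R x, h⟩ = FreeGroup.of (Sum.inl x : ThIdx X R)) ∧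
      (∀ (r : {r : FreeGroup X // r ∈ R}) (h : θM X R (Sum.inr r) * embX X R r.1 ∈ Hgrp X R),
        φ' ⟨θM X R (Sum.inr r) * embX X R r.1, h⟩ = FreeGroup.of (Sum.inr r : ThIdx X R)) ∧
      Function.Bijective
        (fun g : {g : ↥(Hgrp X R) // (g : M X R) ∈ Kpos X R} => φ' g.1)) := by
  refine ⟨⟨hgrpEquiv X R⟩,
    ⟨φH X R, fun x h => ?_, fun a h => ?_, bijective_φH_restrict X R _ (Kneg_eq X R)⟩,
    ⟨φH X R, fun x h => ?_, fun r h => ?_, bijective_φH_restrict X R _ (Kpos_eq X R)⟩⟩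
  · exact φH_mk_of_prodToM_eq X R h (p := (.of x, 1)) (by simp [prodToM_apply])
  · exact φH_mk_of_prodToM_eq X R h (p := (1, .of a)) (by simp [prodToM_apply])
  · exact φH_mk_of_prodToM_eq X R h <| by
      simpa using prodToM_graphSection_of X R (fpos X R) (.inl x)
  · exact φH_mk_of_prodToM_eq X R h <| by
      simpa using prodToM_graphSection_of X R (fpos X R) (.inr r)

open Miller in
/-- The subgroup `H = ⟨X ∪ Θ⟩` of `M(G)` is isomorphic to the direct
product `F(X) × F(Θ)`. Moreover, the homomorphism `φ : H → F(Θ)` defined by `φ(x) = 1` for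
`x ∈ X` and `φ(θ_α) = θ_α` for `α ∈ X ∪ R` restricts to an isomorphism from `K₋₁` onto
`F(Θ)`, and the homomorphism `φ' : H → F(Θ)` defined by `φ'(θ_x x) = θ_x`, `φ'(θ_r r) = θ_r`
restricts to an isomorphism from `K₁` onto `F(Θ)`. In particular, `K₋₁` is a free group
freely generated by `{θ_x x : x ∈ X} ∪ {θ_r : r ∈ R}` and `K₁` is a free group freely
generated by `{θ_x x : x ∈ X} ∪ {θ_r r : r ∈ R}`. -/
theorem statement4 (X : Type) [Fintype X] (R : Finset (FreeGroup X)) (hR : R.Nonempty) :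
    Nonempty (↥(Hgrp X R) ≃* FreeGroup X × FreeGroup (ThIdx X R)) ∧
    (∃ φ : ↥(Hgrp X R) →* FreeGroup (ThIdx X R),
      (∀ (x : X) (h : xM X R x ∈ Hgrp X R), φ ⟨xM X R x, h⟩ = 1) ∧
      (∀ (a : ThIdx X R) (h : θM X R a ∈ Hgrp X R), φ ⟨θM X R a, h⟩ = FreeGroup.of a) ∧
      Function.Bijective
        (fun g : {g : ↥(Hgrp X R) // (g : M X R) ∈ Kneg X R} => φ g.1)) ∧
    (∃ φ' : ↥(Hgrp X R) →* FreeGroup (ThIdx X R),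
      (∀ (x : X) (h : θM X R (Sum.inl x) * xM X R x ∈ Hgrp X R),
        φ' ⟨θM X R (Sum.inl x) * xM X R x, h⟩ = FreeGroup.of (Sum.inl x : ThIdx X R)) ∧
      (∀ (r : {r : FreeGroup X // r ∈ R}) (h : θM X R (Sum.inr r) * embX X R r.1 ∈ Hgrp X R),
        φ' ⟨θM X R (Sum.inr r) * embX X R r.1, h⟩ = FreeGroup.of (Sum.inr r : ThIdx X R)) ∧
      Function.Bijective
        (fun g : {g : ↥(Hgrp X R) // (g : M X R) ∈ Kpos X R} => φ' g.1)) :=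
  statement4_general X R
end

section
/- In the Miller Machine M(G), both intersections K_{−1} ∩ ⟨X, q⟩_{M(G)} and K_1 ∩ ⟨X, q⟩_{M(G)} are trivial. -/
namespace Miller

noncomputable section

variable (X : Type) (R : Finset (FreeGroup X))

/-- Map on generators killing `X` and `q`, keeping `Θ`. -/
def projf : Gen X R → FreeGroup (ThIdx X R)
  | Sum.inl _ => 1
  | Sum.inr (Sum.inl a) => FreeGroup.of a
  | Sum.inr (Sum.inr _) => 1

lemma projf_ofX (w : FreeGroup X) : FreeGroup.lift (projf X R) (ofX X R w) = 1 := by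
  have h : (FreeGroup.lift (projf X R)).comp (ofX X R) = 1 := by
    ext x
    simp [ofX, projf]
  calc FreeGroup.lift (projf X R) (ofX X R w)
      = ((FreeGroup.lift (projf X R)).comp (ofX X R)) w := rfl
    _ = 1 := by rw [h]; rfl

lemma projf_rels : ∀ r ∈ rels X R, FreeGroup.lift (projf X R) r = 1 := by
  rintro w (⟨a, x, rfl⟩ | ⟨x, rfl⟩ | ⟨r, rfl⟩) <;>
    simp [θg, xg, qg, projf, projf_ofX]

/-- The retraction `M(G) → F(Θ)` killing `X` and `q`. -/
def proj : M X R →* FreeGroup (ThIdx X R) := PresentedGroup.toGroup (projf_rels X R)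

lemma proj_toM (w : FreeGroup (Gen X R)) :
    proj X R (toM X R w) = FreeGroup.lift (projf X R) w := rfl

lemma proj_xM (x : X) : proj X R (xM X R x) = 1 := by
  simp [xM, proj_toM, xg, projf]

lemma proj_qM : proj X R (qM X R) = 1 := by
  simp [qM, proj_toM, qg, projf]

lemma proj_θM (a : ThIdx X R) : proj X R (θM X R a) = FreeGroup.of a := by
  simp [θM, proj_toM, θg, projf]

lemma proj_embX (w : FreeGroup X) : proj X R (embX X R w) = 1 := by
  simp [embX, proj_toM, projf_ofX]

lemma XqSub_le_ker : XqSub X R ≤ (proj X R).ker := by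
  rw [XqSub, Subgroup.closure_le]
  rintro _ (⟨x, rfl⟩ | rfl)
  · exact proj_xM X R x
  · exact proj_qM X R

lemma key (s : FreeGroup (ThIdx X R) →* M X R)
    (hs : ∀ w, proj X R (s w) = w)
    (K : Subgroup (M X R)) (hK : K ≤ s.range) : K ⊓ XqSub X R = ⊥ := by
  rw [eq_bot_iff]
  rintro g ⟨hgK, hgX⟩
  obtain ⟨w, rfl⟩ := hK hgK
  have h1 : proj X R (s w) = 1 := XqSub_le_ker X R hgX
  rw [hs] at h1
  rw [Subgroup.mem_bot, h1, map_one]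

/-- Section for `K₋₁`. -/
def sneg : FreeGroup (ThIdx X R) →* M X R :=
  FreeGroup.lift fun a =>
    match a with
    | Sum.inl x => θM X R (Sum.inl x) * xM X R x
    | Sum.inr r => θM X R (Sum.inr r)

/-- Section for `K₁`. -/
def spos : FreeGroup (ThIdx X R) →* M X R :=
  FreeGroup.lift fun a =>
    match a with
    | Sum.inl x => θM X R (Sum.inl x) * xM X R x
    | Sum.inr r => θM X R (Sum.inr r) * embX X R r.1

lemma proj_sneg (w : FreeGroup (ThIdx X R)) : proj X R (sneg X R w) = w := by
  have h : (proj X R).comp (sneg X R) = MonoidHom.id _ := by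
    ext a
    rcases a with x | r <;>
      simp [sneg, proj_θM, proj_xM]
  calc proj X R (sneg X R w) = ((proj X R).comp (sneg X R)) w := rfl
    _ = w := by rw [h]; rfl

lemma proj_spos (w : FreeGroup (ThIdx X R)) : proj X R (spos X R w) = w := by
  have h : (proj X R).comp (spos X R) = MonoidHom.id _ := by
    ext a
    rcases a with x | r <;>
      simp [spos, proj_θM, proj_xM, proj_embX]
  calc proj X R (spos X R w) = ((proj X R).comp (spos X R)) w := rfl
    _ = w := by rw [h]; rfl

lemma Kneg_le_range : Kneg X R ≤ (sneg X R).range := by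
  rw [Kneg, Subgroup.closure_le]
  rintro _ (⟨x, rfl⟩ | ⟨r, rfl⟩)
  · exact ⟨FreeGroup.of (Sum.inl x), by simp [sneg]⟩
  · exact ⟨FreeGroup.of (Sum.inr r), by simp [sneg]⟩

lemma Kpos_le_range : Kpos X R ≤ (spos X R).range := by
  rw [Kpos, Subgroup.closure_le]
  rintro _ (⟨x, rfl⟩ | ⟨r, rfl⟩)
  · exact ⟨FreeGroup.of (Sum.inl x), by simp [spos]⟩
  · exact ⟨FreeGroup.of (Sum.inr r), by simp [spos]⟩

end

end Miller

open Miller in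
/-- In the Miller machine `M(G)`, both intersections
`K₋₁ ∩ ⟨X, q⟩` and `K₁ ∩ ⟨X, q⟩` are trivial. -/
theorem statement5 (X : Type) [Fintype X] (R : Finset (FreeGroup X)) (hR : R.Nonempty) :
    Kneg X R ⊓ XqSub X R = ⊥ ∧ Kpos X R ⊓ XqSub X R = ⊥ :=
  ⟨key X R (sneg X R) (proj_sneg X R) _ (Kneg_le_range X R),
   key X R (spos X R) (proj_spos X R) _ (Kpos_le_range X R)⟩
end

section
/- Let κ : K_1 → K_{−1} be the isomorphism determined by κ(θ_x x) = θ_x x for x ∈ X and κ(θ_r r) = θ_r for r ∈ R. Then the Miller Machine M(G) is isomorphic to the HNN extension of H = ⟨X ∪ Θ⟩_{M(G)} ≅ F(X) × F(Θ) along κ, with stable letter q; that is, M(G) is isomorphic to the group generated by X ∪ Θ ∪ {q} subject to the relations θ_α x = x θ_α (x ∈ X, α ∈ X ∪ R), q θ_x x q⁻¹ = θ_x x (x ∈ X), and q θ_r r q⁻¹ = θ_r (r ∈ R). -/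
namespace Miller

/-- The relators of the presentation of `M(G)` as an HNN extension of `H` along `κ` with
stable letter `q`: `θ_α x = x θ_α` (`x ∈ X`, `α ∈ X ∪ R`), `q (θ_x x) q⁻¹ = θ_x x`
(`x ∈ X`), and `q (θ_r r) q⁻¹ = θ_r` (`r ∈ R`). -/
def rels2 (X : Type) (R : Finset (FreeGroup X)) : Set (FreeGroup (Gen X R)) :=
  {w | (∃ (a : ThIdx X R) (x : X),
          w = θg X R a * xg X R x * (xg X R x * θg X R a)⁻¹) ∨
       (∃ x : X,
          w = qg X R * (θg X R (Sum.inl x) * xg X R x) * (qg X R)⁻¹ *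
              (θg X R (Sum.inl x) * xg X R x)⁻¹) ∨
       (∃ r : {r : FreeGroup X // r ∈ R},
          w = qg X R * (θg X R (Sum.inr r) * ofX X R r.1) * (qg X R)⁻¹ *
              (θg X R (Sum.inr r))⁻¹)}

end Miller

/-!
Given the commutation relations `θ_α x = x θ_α`, the relation `θ_x x q = q x θ_x` says exactly
that `q` commutes with `θ_x x`; and since `θ_r` then commutes with the word `r`, the relation
`θ_r q = q r θ_r` says exactly that `q (θ_r r) q⁻¹ = θ_r`. So the two presentations define the
same group, and conjugation by `q` carries `K₁` onto `K₋₁` as `κ` prescribes.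
-/

namespace PresentedGroup

variable {α : Type*} {S T : Set (FreeGroup α)}

theorem lift_of_eq_mk : FreeGroup.lift (of (rels := S)) = mk S :=
  FreeGroup.ext_hom _ _ fun _ => FreeGroup.lift_apply_of

def equivOfMkEqOne (hST : ∀ w ∈ S, mk T w = 1) (hTS : ∀ w ∈ T, mk S w = 1) :
    PresentedGroup S ≃* PresentedGroup T :=
  MonoidHom.toMulEquiv (toGroup (f := of) (by rwa [lift_of_eq_mk]))
    (toGroup (f := of) (by rwa [lift_of_eq_mk]))
    (ext fun x => by simp only [MonoidHom.comp_apply, toGroup.of, MonoidHom.id_apply])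
    (ext fun x => by simp only [MonoidHom.comp_apply, toGroup.of, MonoidHom.id_apply])

theorem equivOfMkEqOne_of (hST : ∀ w ∈ S, mk T w = 1) (hTS : ∀ w ∈ T, mk S w = 1) (x : α) :
    equivOfMkEqOne hST hTS (of x) = of x :=
  toGroup.of (f := of) (by rwa [lift_of_eq_mk])

end PresentedGroup

theorem FreeGroup.commute_apply_of_forall_commute_of {β Γ : Type*} [Group Γ] {t : Γ}
    {ψ : FreeGroup β →* Γ} (h : ∀ b, Commute t (ψ (FreeGroup.of b))) (w : FreeGroup β) :
    Commute t (ψ w) := by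
  induction w using FreeGroup.induction_on with
  | C1 => rw [_root_.map_one]; exact Commute.one_right t
  | of b => exact h b
  | inv_of b hb => rw [_root_.map_inv]; exact hb.inv_right
  | mul u v hu hv => rw [_root_.map_mul]; exact hu.mul_right hv

namespace Miller

variable {X : Type} {R : Finset (FreeGroup X)} {Γ : Type*} [Group Γ]
  (φ : FreeGroup (Gen X R) →* Γ)

theorem map_rels_eq_one_iff : (∀ w ∈ rels X R, φ w = 1) ↔
    (∀ a x, Commute (φ (θg X R a)) (φ (xg X R x))) ∧
    (∀ x, φ (θg X R (.inl x)) * φ (xg X R x) * φ (qg X R) =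
      φ (qg X R) * φ (xg X R x) * φ (θg X R (.inl x))) ∧
    (∀ r : {r : FreeGroup X // r ∈ R}, φ (θg X R (.inr r)) * φ (qg X R) =
      φ (qg X R) * φ (ofX X R r) * φ (θg X R (.inr r))) := by
  constructor
  · intro h
    refine ⟨fun a x => ?_, fun x => ?_, fun r => ?_⟩
    · simpa only [map_mul, map_inv, mul_inv_eq_one, commute_iff_eq]
        using h _ (Or.inl ⟨a, x, rfl⟩)
    · simpa only [map_mul, map_inv, mul_inv_eq_one] using h _ (Or.inr (Or.inl ⟨x, rfl⟩))
    · simpa only [map_mul, map_inv, mul_inv_eq_one] using h _ (Or.inr (Or.inr ⟨r, rfl⟩))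
  · rintro ⟨hcomm, hx, hr⟩ w (⟨a, x, rfl⟩ | ⟨x, rfl⟩ | ⟨r, rfl⟩) <;>
      simp only [map_mul, map_inv, mul_inv_eq_one]
    exacts [(hcomm a x).eq, hx x, hr r]

theorem map_rels2_eq_one_iff : (∀ w ∈ rels2 X R, φ w = 1) ↔
    (∀ a x, Commute (φ (θg X R a)) (φ (xg X R x))) ∧
    (∀ x, φ (qg X R) * (φ (θg X R (.inl x)) * φ (xg X R x)) * (φ (qg X R))⁻¹ =
      φ (θg X R (.inl x)) * φ (xg X R x)) ∧
    (∀ r : {r : FreeGroup X // r ∈ R},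
      φ (qg X R) * (φ (θg X R (.inr r)) * φ (ofX X R r)) * (φ (qg X R))⁻¹ =
        φ (θg X R (.inr r))) := by
  constructor
  · intro h
    refine ⟨fun a x => ?_, fun x => ?_, fun r => ?_⟩
    · simpa only [map_mul, map_inv, mul_inv_eq_one, commute_iff_eq]
        using h _ (Or.inl ⟨a, x, rfl⟩)
    · simpa only [map_mul, map_inv, mul_inv_eq_one] using h _ (Or.inr (Or.inl ⟨x, rfl⟩))
    · simpa only [map_mul, map_inv, mul_inv_eq_one] using h _ (Or.inr (Or.inr ⟨r, rfl⟩))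
  · rintro ⟨hcomm, hx, hr⟩ w (⟨a, x, rfl⟩ | ⟨x, rfl⟩ | ⟨r, rfl⟩) <;>
      simp only [map_mul, map_inv, mul_inv_eq_one]
    exacts [(hcomm a x).eq, hx x, hr r]

theorem map_rels_eq_one_iff_map_rels2_eq_one :
    (∀ w ∈ rels X R, φ w = 1) ↔ (∀ w ∈ rels2 X R, φ w = 1) := by
  rw [map_rels_eq_one_iff, map_rels2_eq_one_iff]
  refine and_congr_right fun hcomm =>
    and_congr (forall_congr' fun x => ?_) (forall_congr' fun r => ?_)
  · rw [mul_inv_eq_iff_eq_mul, (hcomm _ x).eq, ← mul_assoc, eq_comm]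
  · have hcomm_r : Commute (φ (θg X R (.inr r))) (φ (ofX X R r)) :=
      FreeGroup.commute_apply_of_forall_commute_of (ψ := φ.comp (ofX X R))
        (fun x => by simpa only [MonoidHom.comp_apply, ofX, FreeGroup.map.of, xg]
          using hcomm _ x) r
    rw [mul_inv_eq_iff_eq_mul, hcomm_r.eq, ← mul_assoc, eq_comm]

variable (X R)

theorem mk_rels2_eq_one_of_mem_rels : ∀ w ∈ rels X R, PresentedGroup.mk (rels2 X R) w = 1 :=
  (map_rels_eq_one_iff_map_rels2_eq_one _).2 fun _ => PresentedGroup.one_of_mem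

theorem toM_eq_one_of_mem_rels2 : ∀ w ∈ rels2 X R, toM X R w = 1 :=
  (map_rels_eq_one_iff_map_rels2_eq_one _).1 fun _ => PresentedGroup.one_of_mem

theorem qM_conj_θM_inl_mul_xM (x : X) :
    qM X R * (θM X R (.inl x) * xM X R x) * (qM X R)⁻¹ = θM X R (.inl x) * xM X R x :=
  ((map_rels2_eq_one_iff _).1 (toM_eq_one_of_mem_rels2 X R)).2.1 x

theorem qM_conj_θM_inr_mul_embX (r : {r : FreeGroup X // r ∈ R}) :
    qM X R * (θM X R (.inr r) * embX X R r) * (qM X R)⁻¹ = θM X R (.inr r) :=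
  ((map_rels2_eq_one_iff _).1 (toM_eq_one_of_mem_rels2 X R)).2.2 r

theorem map_conj_qM_Kpos : (Kpos X R).map (MulAut.conj (qM X R)).toMonoidHom = Kneg X R := by
  simp only [Kpos, Kneg, MonoidHom.map_closure, Set.image_union, ← Set.range_comp,
    Function.comp_def, MulEquiv.coe_toMonoidHom, MulAut.conj_apply, qM_conj_θM_inl_mul_xM,
    qM_conj_θM_inr_mul_embX]

end Miller

open Miller in
theorem statement6_general (X : Type) (R : Finset (FreeGroup X)) :
    (∃ κ : ↥(Kpos X R) ≃* ↥(Kneg X R),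
      (∀ (x : X) (h : θM X R (Sum.inl x) * xM X R x ∈ Kpos X R),
        ((κ ⟨θM X R (Sum.inl x) * xM X R x, h⟩ : ↥(Kneg X R)) : M X R) =
          θM X R (Sum.inl x) * xM X R x) ∧
      (∀ (r : {r : FreeGroup X // r ∈ R}) (h : θM X R (Sum.inr r) * embX X R r.1 ∈ Kpos X R),
        ((κ ⟨θM X R (Sum.inr r) * embX X R r.1, h⟩ : ↥(Kneg X R)) : M X R) =
          θM X R (Sum.inr r))) ∧
    (∃ e : M X R ≃* PresentedGroup (rels2 X R),
      ∀ g : Gen X R, e (toM X R (FreeGroup.of g)) = PresentedGroup.of g) :=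
  ⟨⟨((MulAut.conj (qM X R)).subgroupMap (Kpos X R)).trans
      (MulEquiv.subgroupCongr (map_conj_qM_Kpos X R)),
      fun x _ => qM_conj_θM_inl_mul_xM X R x, fun r _ => qM_conj_θM_inr_mul_embX X R r⟩,
    ⟨PresentedGroup.equivOfMkEqOne (mk_rels2_eq_one_of_mem_rels X R)
        (toM_eq_one_of_mem_rels2 X R),
      PresentedGroup.equivOfMkEqOne_of _ _⟩⟩

open Miller in
/-- Let `κ : K₁ → K₋₁` be the isomorphism determined by `κ(θ_x x) = θ_x x`
for `x ∈ X` and `κ(θ_r r) = θ_r` for `r ∈ R`. Then the Miller machine `M(G)` is isomorphic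
to the HNN extension of `H = ⟨X ∪ Θ⟩ ≅ F(X) × F(Θ)` along `κ` with stable letter `q`; that
is, `M(G)` is isomorphic (via a generator-preserving isomorphism) to the group generated by
`X ∪ Θ ∪ {q}` subject to the relations `θ_α x = x θ_α` (`x ∈ X`, `α ∈ X ∪ R`),
`q θ_x x q⁻¹ = θ_x x` (`x ∈ X`) and `q θ_r r q⁻¹ = θ_r` (`r ∈ R`). -/
theorem statement6 (X : Type) [Fintype X] (R : Finset (FreeGroup X)) (hR : R.Nonempty) :
    (∃ κ : ↥(Kpos X R) ≃* ↥(Kneg X R),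
      (∀ (x : X) (h : θM X R (Sum.inl x) * xM X R x ∈ Kpos X R),
        ((κ ⟨θM X R (Sum.inl x) * xM X R x, h⟩ : ↥(Kneg X R)) : M X R) =
          θM X R (Sum.inl x) * xM X R x) ∧
      (∀ (r : {r : FreeGroup X // r ∈ R}) (h : θM X R (Sum.inr r) * embX X R r.1 ∈ Kpos X R),
        ((κ ⟨θM X R (Sum.inr r) * embX X R r.1, h⟩ : ↥(Kneg X R)) : M X R) =
          θM X R (Sum.inr r))) ∧
    (∃ e : M X R ≃* PresentedGroup (rels2 X R),
      ∀ g : Gen X R, e (toM X R (FreeGroup.of g)) = PresentedGroup.of g) :=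
  statement6_general X R
end
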